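/- (Higher-order Euler–Poincaré equations characterize critical points.) Let k ≥ 1, t₀ < t₁, let L : (Fin k → 𝔤) → ℝ be smooth, and let ξ : ℝ → 𝔤 be smooth with momentum π. Then the following are equivalent: (a) for every variation direction σ of order k on [t₀,t₁], ∫_{t₀}^{t₁} ∑_{r=1}^{k} ∂_rL(Jξ(t))( (δ_σξ)^{(r−1)}(t) ) dt = 0, where δ_σξ := σ' + [ξ, σ]; (b) ξ satisfies the higher-order Euler–Poincaré equations for L on [t₀,t₁]: π'(t)(η) = π(t)([ξ(t), η]) for all t ∈ [t₀,t₁] and all η ∈ 𝔤. -/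

import Mathlib

/-!
Integrating by parts `i` times in slot `i` turns the first variation into `∫ π (δ_σ ξ)`.
Since `δ_σ ξ = σ' + [ξ, σ]`, one more integration by parts gives `∫ (π ∘ [ξ, ·] - π') σ`.
All boundary terms vanish: `σ` vanishes to order `k - 1` at `t₀` and `t₁`, so `δ_σ ξ` vanishes to
order `k - 2` there. The equivalence is then the fundamental lemma of the calculus of variations
applied to the continuous covector curve `π ∘ [ξ, ·] - π'`.
-/

noncomputable section

/-- Partial Fréchet derivative in slot `r` of a map defined on `Fin m → E`,
as a continuous linear map (zero junk value for `r ≥ m`). -/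
def pd {m : ℕ} {E W : Type*} [NormedAddCommGroup E] [NormedSpace ℝ E]
    [NormedAddCommGroup W] [NormedSpace ℝ W]
    (F : (Fin m → E) → W) (r : ℕ) (A : Fin m → E) : E →L[ℝ] W :=
  if h : r < m then
    (fderiv ℝ F A).comp
      (ContinuousLinearMap.pi (Pi.single (⟨r, h⟩ : Fin m) (ContinuousLinearMap.id ℝ E)))
  else 0

/-- The reduced `k`-jet of a curve: slot `i` (Lean indexing `0,…,k-1`, i.e. the paper's
slot `r = i+1`) holds the `i`-th derivative. -/
def rjet {E : Type*} [NormedAddCommGroup E] [NormedSpace ℝ E] (k : ℕ) (q : ℝ → E) (t : ℝ) :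
    Fin k → E := fun i => iteratedDeriv i q t

open Set MeasureTheory intervalIntegral
open scoped ContDiff

section Curves

variable {F G : Type*} [NormedAddCommGroup F] [NormedSpace ℝ F]
  [NormedAddCommGroup G] [NormedSpace ℝ G]

theorem ContDiff.deriv_infty {f : ℝ → F} (hf : ContDiff ℝ ∞ f) : ContDiff ℝ ∞ (deriv f) :=
  (contDiff_infty_iff_deriv.mp hf).2

theorem ContDiff.iteratedDeriv {f : ℝ → F} (hf : ContDiff ℝ ∞ f) (n : ℕ) :
    ContDiff ℝ ∞ (iteratedDeriv n f) := by
  rw [iteratedDeriv_eq_iterate]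
  exact hf.iterate_deriv n

theorem iteratedDeriv_eq_zero_of_notMem_tsupport {f : ℝ → F} {x : ℝ} (hx : x ∉ tsupport f)
    (n : ℕ) : iteratedDeriv n f x = 0 := by
  rw [iteratedDeriv_eq_iteratedFDeriv,
    Function.notMem_support.1 fun h => hx (support_iteratedFDeriv_subset n h)]
  rfl

theorem deriv_clm_apply_eq {c : ℝ → F →L[ℝ] G} {g : ℝ → F} (hc : ContDiff ℝ 1 c)
    (hg : ContDiff ℝ 1 g) :
    deriv (fun t => c t (g t)) = fun t => deriv c t (g t) + c t (deriv g t) :=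
  funext fun t => ((hc.differentiable one_ne_zero t).hasDerivAt.clm_apply
    (hg.differentiable one_ne_zero t).hasDerivAt).deriv

theorem iteratedDeriv_clm_apply_eq_zero {c : ℝ → F →L[ℝ] G} {g : ℝ → F} {x : ℝ} {j : ℕ}
    (hc : ContDiff ℝ ∞ c) (hg : ContDiff ℝ ∞ g) (h : ∀ m ≤ j, iteratedDeriv m g x = 0) :
    iteratedDeriv j (fun t => c t (g t)) x = 0 := by
  induction j generalizing c g with
  | zero =>
    have hg₀ : g x = 0 := by simpa using h 0 le_rfl
    simp [hg₀]
  | succ j ih =>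
    rw [iteratedDeriv_succ',
      deriv_clm_apply_eq (hc.of_le (mod_cast le_top)) (hg.of_le (mod_cast le_top)),
      iteratedDeriv_fun_add ((hc.deriv_infty.clm_apply hg).contDiffAt.of_le (mod_cast le_top))
        ((hc.clm_apply hg.deriv_infty).contDiffAt.of_le (mod_cast le_top)),
      ih hc.deriv_infty hg fun m hm => h m (by omega),
      ih hc hg.deriv_infty fun m hm => by rw [← iteratedDeriv_succ']; exact h (m + 1) (by omega),
      add_zero]

theorem iteratedDeriv_deriv_add_clm_apply_eq_zero {b : ℝ → F →L[ℝ] F} {σ : ℝ → F} {x : ℝ}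
    {j : ℕ} (hb : ContDiff ℝ ∞ b) (hσ : ContDiff ℝ ∞ σ)
    (h : ∀ m ≤ j + 1, iteratedDeriv m σ x = 0) :
    iteratedDeriv j (fun u => deriv σ u + b u (σ u)) x = 0 := by
  rw [iteratedDeriv_fun_add (hσ.deriv_infty.contDiffAt.of_le (mod_cast le_top))
      ((hb.clm_apply hσ).contDiffAt.of_le (mod_cast le_top)), ← iteratedDeriv_succ',
    h (j + 1) le_rfl, iteratedDeriv_clm_apply_eq_zero hb hσ fun m hm => h m (by omega), add_zero]

-- With `A i = fun s => pd L i (rjet k ξ s)` this is the momentum `π`.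
def momentum (k : ℕ) (A : ℕ → ℝ → F →L[ℝ] G) (t : ℝ) : F →L[ℝ] G :=
  ∑ i ∈ Finset.range k, (-1 : ℝ) ^ i • iteratedDeriv i (A i) t

theorem ContDiff.momentum {k : ℕ} {A : ℕ → ℝ → F →L[ℝ] G} (hA : ∀ i, ContDiff ℝ ∞ (A i)) :
    ContDiff ℝ ∞ (momentum k A) :=
  ContDiff.sum fun i _ => ((hA i).iteratedDeriv i).const_smul _

end Curves

section Variations

variable {F G : Type*} [NormedAddCommGroup F] [NormedSpace ℝ F]
  [NormedAddCommGroup G] [NormedSpace ℝ G] [CompleteSpace G] {t₀ t₁ : ℝ}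

theorem integral_clm_apply_deriv_eq_neg {A : ℝ → F →L[ℝ] G} {g : ℝ → F} (hA : ContDiff ℝ 1 A)
    (hg : ContDiff ℝ 1 g) (h₀ : g t₀ = 0) (h₁ : g t₁ = 0) :
    ∫ t in t₀..t₁, A t (deriv g t) = -∫ t in t₀..t₁, deriv A t (g t) := by
  have hA' := (hA.continuous_deriv le_rfl).clm_apply hg.continuous
  have hg' := hA.continuous.clm_apply (hg.continuous_deriv le_rfl)
  have hftc : ∫ t in t₀..t₁, (deriv A t (g t) + A t (deriv g t)) = A t₁ (g t₁) - A t₀ (g t₀) :=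
    integral_eq_sub_of_hasDerivAt (fun t _ => (hA.differentiable one_ne_zero t).hasDerivAt.clm_apply
      (hg.differentiable one_ne_zero t).hasDerivAt) ((hA'.add hg').intervalIntegrable _ _)
  rw [integral_add (hA'.intervalIntegrable _ _) (hg'.intervalIntegrable _ _), h₀, h₁, map_zero,
    map_zero, sub_zero] at hftc
  exact eq_neg_of_add_eq_zero_right hftc

theorem integral_clm_apply_iteratedDeriv_eq {A : ℝ → F →L[ℝ] G} {g : ℝ → F} (n : ℕ)
    (hA : ContDiff ℝ ∞ A) (hg : ContDiff ℝ ∞ g)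
    (hbd : ∀ j < n, iteratedDeriv j g t₀ = 0 ∧ iteratedDeriv j g t₁ = 0) :
    ∫ t in t₀..t₁, A t (iteratedDeriv n g t)
      = (-1 : ℝ) ^ n • ∫ t in t₀..t₁, iteratedDeriv n A t (g t) := by
  induction n generalizing A with
  | zero => simp
  | succ n ih =>
    calc ∫ t in t₀..t₁, A t (iteratedDeriv (n + 1) g t)
        = -∫ t in t₀..t₁, deriv A t (iteratedDeriv n g t) := by
          rw [iteratedDeriv_succ]
          exact integral_clm_apply_deriv_eq_neg (hA.of_le (mod_cast le_top))
            ((hg.iteratedDeriv n).of_le (mod_cast le_top)) (hbd n n.lt_succ_self).1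
            (hbd n n.lt_succ_self).2
      _ = (-1 : ℝ) ^ (n + 1) • ∫ t in t₀..t₁, iteratedDeriv (n + 1) A t (g t) := by
          rw [ih hA.deriv_infty fun j hj => hbd j (by omega), iteratedDeriv_succ', pow_succ,
            mul_neg_one, neg_smul]

theorem integral_sum_clm_apply_iteratedDeriv_eq_integral_momentum {k : ℕ}
    {A : ℕ → ℝ → F →L[ℝ] G} {g : ℝ → F} (hA : ∀ i, ContDiff ℝ ∞ (A i)) (hg : ContDiff ℝ ∞ g)
    (hbd : ∀ j, j + 1 < k → iteratedDeriv j g t₀ = 0 ∧ iteratedDeriv j g t₁ = 0) :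
    ∫ t in t₀..t₁, ∑ i ∈ Finset.range k, A i t (iteratedDeriv i g t)
      = ∫ t in t₀..t₁, momentum k A t (g t) := by
  simp only [momentum, _root_.sum_apply, _root_.smul_apply]
  rw [integral_finsetSum fun i _ =>
      ((hA i).continuous.clm_apply (hg.iteratedDeriv i).continuous).intervalIntegrable _ _,
    integral_finsetSum (f := fun i t => (-1 : ℝ) ^ i • iteratedDeriv i (A i) t (g t)) fun i _ =>
      (continuous_const.smul
        (((hA i).iteratedDeriv i).continuous.clm_apply hg.continuous)).intervalIntegrable _ _]
  refine Finset.sum_congr rfl fun i hi => ?_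
  rw [Finset.mem_range] at hi
  rw [intervalIntegral.integral_smul,
    integral_clm_apply_iteratedDeriv_eq i (hA i) hg fun j hj => hbd j (by omega)]

theorem integral_sum_clm_apply_iteratedDeriv_variation_eq {k : ℕ} (hk : 1 ≤ k)
    {A : ℕ → ℝ → F →L[ℝ] G} {b : ℝ → F →L[ℝ] F} {σ : ℝ → F} (hA : ∀ i, ContDiff ℝ ∞ (A i))
    (hb : ContDiff ℝ ∞ b) (hσ : ContDiff ℝ ∞ σ)
    (hbd : ∀ j < k, iteratedDeriv j σ t₀ = 0 ∧ iteratedDeriv j σ t₁ = 0) :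
    ∫ t in t₀..t₁, ∑ i ∈ Finset.range k,
        A i t (iteratedDeriv i (fun u => deriv σ u + b u (σ u)) t)
      = ∫ t in t₀..t₁, ((momentum k A t).comp (b t) - deriv (momentum k A) t) (σ t) := by
  have hπ := ContDiff.momentum (k := k) hA
  have hπσ' := hπ.continuous.clm_apply hσ.deriv_infty.continuous
  have hπbσ := hπ.continuous.clm_apply (hb.continuous.clm_apply hσ.continuous)
  have hπ'σ := hπ.deriv_infty.continuous.clm_apply hσ.continuous
  rw [integral_sum_clm_apply_iteratedDeriv_eq_integral_momentum hA
    (hσ.deriv_infty.add (hb.clm_apply hσ)) fun j hj =>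
      ⟨iteratedDeriv_deriv_add_clm_apply_eq_zero hb hσ fun m hm => (hbd m (by omega)).1,
        iteratedDeriv_deriv_add_clm_apply_eq_zero hb hσ fun m hm => (hbd m (by omega)).2⟩]
  simp only [map_add, _root_.sub_apply, ContinuousLinearMap.comp_apply]
  rw [integral_add (hπσ'.intervalIntegrable _ _) (hπbσ.intervalIntegrable _ _),
    integral_sub (hπbσ.intervalIntegrable _ _) (hπ'σ.intervalIntegrable _ _),
    integral_clm_apply_deriv_eq_neg (hπ.of_le (mod_cast le_top)) (hσ.of_le (mod_cast le_top))
      (by simpa using (hbd 0 hk).1) (by simpa using (hbd 0 hk).2)]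
  abel

theorem eqOn_zero_of_forall_integral_clm_apply_eq_zero
    (ht : t₀ < t₁) {Φ : ℝ → F →L[ℝ] G} (hΦ : Continuous Φ)
    (h : ∀ σ : ℝ → F, ContDiff ℝ ∞ σ → tsupport σ ⊆ Ioo t₀ t₁ →
      ∫ t in t₀..t₁, Φ t (σ t) = 0) :
    EqOn Φ 0 (Icc t₀ t₁) := by
  have hIoo : EqOn Φ 0 (Ioo t₀ t₁) := by
    intro s hs
    ext η
    have hc : Continuous fun t => Φ t η := hΦ.clm_apply continuous_const
    have hae : ∀ᵐ t, t ∈ Ioo t₀ t₁ → Φ t η = 0 :=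
      isOpen_Ioo.ae_eq_zero_of_integral_contDiff_smul_eq_zero
        (hc.locallyIntegrable.locallyIntegrableOn _) fun g hg _ hgU => by
          calc ∫ t, g t • Φ t η = ∫ t in Ioc t₀ t₁, g t • Φ t η :=
                (setIntegral_eq_integral_of_forall_compl_eq_zero fun t ht => by
                  rw [image_eq_zero_of_notMem_tsupport fun h => ht (Ioo_subset_Ioc_self (hgU h)),
                    zero_smul]).symm
            _ = ∫ t in t₀..t₁, Φ t (g t • η) := by simp only [map_smul, integral_of_le ht.le]
            _ = 0 := h _ (hg.smul contDiff_const) ((tsupport_smul_subset_left _ _).trans hgU)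
    simpa using Measure.eqOn_Ioo_of_ae_eq volume ((ae_restrict_iff' measurableSet_Ioo).2 hae)
      hc.continuousOn continuousOn_const hs
  exact hIoo.of_subset_closure hΦ.continuousOn continuousOn_const Ioo_subset_Icc_self
    (closure_Ioo ht.ne).ge

theorem forall_integral_variation_eq_zero_iff {k : ℕ} (hk : 1 ≤ k) (ht : t₀ < t₁)
    {A : ℕ → ℝ → F →L[ℝ] G} {b : ℝ → F →L[ℝ] F} (hA : ∀ i, ContDiff ℝ ∞ (A i))
    (hb : ContDiff ℝ ∞ b) :
    (∀ σ : ℝ → F, ContDiff ℝ ∞ σ →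
        (∀ j < k, iteratedDeriv j σ t₀ = 0 ∧ iteratedDeriv j σ t₁ = 0) →
        ∫ t in t₀..t₁, ∑ i ∈ Finset.range k,
          A i t (iteratedDeriv i (fun u => deriv σ u + b u (σ u)) t) = 0) ↔
      ∀ t ∈ Icc t₀ t₁, ∀ η : F, deriv (momentum k A) t η = momentum k A t (b t η) := by
  have hπ := ContDiff.momentum (k := k) hA
  constructor
  · intro hcrit t ht' η
    have hbd (σ : ℝ → F) (hsupp : tsupport σ ⊆ Ioo t₀ t₁) (j : ℕ) :
        iteratedDeriv j σ t₀ = 0 ∧ iteratedDeriv j σ t₁ = 0 :=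
      ⟨iteratedDeriv_eq_zero_of_notMem_tsupport (fun h => (hsupp h).1.false) j,
        iteratedDeriv_eq_zero_of_notMem_tsupport (fun h => (hsupp h).2.false) j⟩
    have hΦ := eqOn_zero_of_forall_integral_clm_apply_eq_zero
      (Φ := fun t => (momentum k A t).comp (b t) - deriv (momentum k A) t) ht
      ((hπ.continuous.clm_comp hb.continuous).sub hπ.deriv_infty.continuous)
      (fun σ hσ hsupp => by
        rw [← integral_sum_clm_apply_iteratedDeriv_variation_eq hk hA hb hσ fun j _ =>
          hbd σ hsupp j]
        exact hcrit σ hσ fun j _ => hbd σ hsupp j) ht'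
    exact (sub_eq_zero.1 (DFunLike.congr_fun hΦ η)).symm
  · intro hEP σ hσ hbd
    rw [integral_sum_clm_apply_iteratedDeriv_variation_eq hk hA hb hσ hbd,
      integral_congr (g := fun _ => 0) fun t ht' => ?_, intervalIntegral.integral_zero]
    rw [uIcc_of_le ht.le] at ht'
    simp [hEP t ht' (σ t)]

end Variations

theorem contDiff_pd {m : ℕ} {E W : Type*} [NormedAddCommGroup E] [NormedSpace ℝ E]
    [NormedAddCommGroup W] [NormedSpace ℝ W] {Λ : (Fin m → E) → W} (hΛ : ContDiff ℝ ∞ Λ)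
    (r : ℕ) : ContDiff ℝ ∞ (pd Λ r) := by
  unfold pd
  split_ifs
  · exact (hΛ.fderiv_right (mod_cast le_top)).clm_comp contDiff_const
  · exact contDiff_const

theorem contDiff_rjet {E : Type*} [NormedAddCommGroup E] [NormedSpace ℝ E] {k : ℕ}
    {q : ℝ → E} (hq : ContDiff ℝ ∞ q) : ContDiff ℝ ∞ (rjet k q) :=
  contDiff_pi.2 fun i => hq.iteratedDeriv i

theorem higher_order_euler_poincare_iff_critical_general {𝔤 : Type*} [NormedAddCommGroup 𝔤]
    [NormedSpace ℝ 𝔤] [FiniteDimensional ℝ 𝔤]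
    (bra : 𝔤 →ₗ[ℝ] 𝔤 →ₗ[ℝ] 𝔤)
    (k : ℕ) (hk : 1 ≤ k) (t₀ t₁ : ℝ) (ht : t₀ < t₁)
    (L : (Fin k → 𝔤) → ℝ) (hL : ContDiff ℝ (⊤ : ℕ∞) L)
    (ξ : ℝ → 𝔤) (hξ : ContDiff ℝ (⊤ : ℕ∞) ξ)
    (π : ℝ → 𝔤 →L[ℝ] ℝ)
    (hπ : π = fun t => ∑ i ∈ Finset.range k,
        (-1 : ℝ) ^ i • iteratedDeriv i (fun s => pd L i (rjet k ξ s)) t) :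
    (∀ σ : ℝ → 𝔤, ContDiff ℝ (⊤ : ℕ∞) σ →
        (∀ j < k, iteratedDeriv j σ t₀ = 0 ∧ iteratedDeriv j σ t₁ = 0) →
        (∫ t in t₀..t₁, ∑ i ∈ Finset.range k,
          pd L i (rjet k ξ t)
            (iteratedDeriv i (fun u => deriv σ u + bra (ξ u) (σ u)) t)) = 0) ↔
      ∀ t ∈ Set.Icc t₀ t₁, ∀ η : 𝔤, deriv π t η = π t (bra (ξ t) η) := by
  have hA (i : ℕ) : ContDiff ℝ ∞ fun s => pd L i (rjet k ξ s) :=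
    (contDiff_pd hL i).comp (contDiff_rjet hξ)
  obtain rfl : π = momentum k fun i s => pd L i (rjet k ξ s) := hπ
  simpa only [Function.comp_apply, LinearMap.toContinuousBilinearMap_apply] using
    forall_integral_variation_eq_zero_iff hk ht hA (bra.toContinuousBilinearMap.contDiff.comp hξ)

/-- **Higher-order Euler–Poincaré equations characterize critical points.**
The Lie algebra `𝔤` is modeled as a finite-dimensional real normed space together with a
bilinear bracket `bra` which is skew-symmetric and satisfies the Jacobi identity.
A smooth curve `ξ` with momentum `π` annihilates the first variation for all variation
directions `σ` of order `k` on `[t₀,t₁]` (with `δ_σξ = σ' + [ξ,σ]`) if and only if it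
satisfies the higher-order Euler–Poincaré equations `π'(t)(η) = π(t)([ξ t, η])` on `[t₀,t₁]`. -/
theorem higher_order_euler_poincare_iff_critical {𝔤 : Type*} [NormedAddCommGroup 𝔤]
    [NormedSpace ℝ 𝔤] [FiniteDimensional ℝ 𝔤]
    (bra : 𝔤 →ₗ[ℝ] 𝔤 →ₗ[ℝ] 𝔤)
    (hskew : ∀ x y : 𝔤, bra x y = - bra y x)
    (hjac : ∀ x y z : 𝔤, bra x (bra y z) + bra y (bra z x) + bra z (bra x y) = 0)
    (k : ℕ) (hk : 1 ≤ k) (t₀ t₁ : ℝ) (ht : t₀ < t₁)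
    (L : (Fin k → 𝔤) → ℝ) (hL : ContDiff ℝ (⊤ : ℕ∞) L)
    (ξ : ℝ → 𝔤) (hξ : ContDiff ℝ (⊤ : ℕ∞) ξ)
    (π : ℝ → 𝔤 →L[ℝ] ℝ)
    (hπ : π = fun t => ∑ i ∈ Finset.range k,
        (-1 : ℝ) ^ i • iteratedDeriv i (fun s => pd L i (rjet k ξ s)) t) :
    (∀ σ : ℝ → 𝔤, ContDiff ℝ (⊤ : ℕ∞) σ →
        (∀ j < k, iteratedDeriv j σ t₀ = 0 ∧ iteratedDeriv j σ t₁ = 0) →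
        (∫ t in t₀..t₁, ∑ i ∈ Finset.range k,
          pd L i (rjet k ξ t)
            (iteratedDeriv i (fun u => deriv σ u + bra (ξ u) (σ u)) t)) = 0) ↔
      ∀ t ∈ Set.Icc t₀ t₁, ∀ η : 𝔤, deriv π t η = π t (bra (ξ t) η) :=
  higher_order_euler_poincare_iff_critical_general bra k hk t₀ t₁ ht L hL ξ hξ π hπ
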